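/- Let L be a field of prime characteristic p and s ∈ L with sᵖ = t. Then in the polynomial ring L[u,v], the radical of the principal ideal (uᵖ − t·vᵖ) equals the principal ideal (u − s·v). -/

import Mathlib

open MvPolynomial

theorem radical_span_pow_char {L : Type*} [Field L] (p : ℕ) [Fact p.Prime] [CharP L p]
    (s t : L) (hst : s ^ p = t) :
    (Ideal.span {(MvPolynomial.X 0 : MvPolynomial (Fin 2) L) ^ p
        - MvPolynomial.C t * MvPolynomial.X 1 ^ p}).radical
      = Ideal.span {(MvPolynomial.X 0 : MvPolynomial (Fin 2) L)
        - MvPolynomial.C s * MvPolynomial.X 1} := by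
  set f : MvPolynomial (Fin 2) L := X 0 - C s * X 1 with hf
  have hpow : f ^ p = (X 0 : MvPolynomial (Fin 2) L) ^ p - C t * X 1 ^ p := by
    rw [hf, sub_pow_char, mul_pow, ← C_pow, hst]
  have hprime : Prime f := by
    rw [← MulEquiv.prime_iff (p := f) (MvPolynomial.finSuccEquiv L 1).toMulEquiv]
    have : (MvPolynomial.finSuccEquiv L 1) f
        = Polynomial.X - Polynomial.C (C s * X 0) := by
      have h1 : (X 1 : MvPolynomial (Fin 2) L) = X (Fin.succ 0) := rfl
      have h2 : (MvPolynomial.finSuccEquiv L 1) (C s) = Polynomial.C (C s) := by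
        simp [finSuccEquiv_apply]
      rw [hf, map_sub, map_mul, h1, finSuccEquiv_X_zero, finSuccEquiv_X_succ, h2,
        ← Polynomial.C_mul]
    rw [show (MvPolynomial.finSuccEquiv L 1).toMulEquiv f
        = (MvPolynomial.finSuccEquiv L 1) f from rfl, this]
    have := Polynomial.prime_X_sub_C (R := MvPolynomial (Fin 1) L) (C s * X 0)
    exact this
  have hP : (Ideal.span {f}).IsPrime :=
    (Ideal.span_singleton_prime hprime.ne_zero).mpr hprime
  rw [← hpow]
  have hp1 : p - 1 + 1 = p := Nat.succ_pred_eq_of_pos (Fact.out : p.Prime).pos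
  apply le_antisymm
  · rw [← hP.radical]
    exact Ideal.radical_mono (Ideal.span_singleton_le_span_singleton.mpr
      ⟨f ^ (p - 1), by rw [← pow_succ', hp1]⟩)
  · rw [Ideal.span_le]
    rintro x rfl
    exact Ideal.mem_radical_iff.mpr ⟨p, Ideal.subset_span rfl⟩
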